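/- The Fourier transform of the wavelet Ψ_{rbk}(x) = p^{-r/2} χ_p(p^{-1}k(p^r x − b)) 1_{|p^r x − b|_p ≤ 1} is Ψ̂_{rbk}(ξ) = p^{r/2} χ_p(p^{-r} b ξ) 1_{|p^{-r} ξ + p^{-1} k|_p ≤ 1}, and every ξ in the support of Ψ̂_{rbk} satisfies |ξ|_p = p^{1−r}. -/

import Mathlib

/-!
Translating by `p^{-r} b` turns the integrand into a constant times the character
`x ↦ χ (η x)`, `η = ξ + p^{r-1} k`, restricted to the ball `‖x‖ ≤ p^r`. Over a subgroup, a
character integrates to the measure of the subgroup if it is trivial there and to `0` otherwise,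
since translating by a point where it is nontrivial multiplies the integral by a number `≠ 1`.
The ball `‖x‖ ≤ p^(m+1)` is the disjoint union of `p` translates of the ball `‖x‖ ≤ p^m`, so the
normalised Haar measure of `‖x‖ ≤ p^n` is `p^n`. On the support, `‖p^{-r} ξ + p^{-1} k‖ ≤ 1 < p =
‖p^{-1} k‖`, and the ultrametric inequality gives `‖p^{-r} ξ‖ = p`.
-/

open MeasureTheory Metric

theorem AddChar.integral_indicator_addSubgroup_eq_zero {G : Type*} [AddGroup G]
    [MeasurableSpace G] [MeasurableAdd G] (μ : Measure G) [μ.IsAddLeftInvariant]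
    (ψ : AddChar G ℂ) (H : AddSubgroup G) {u : G} (hu : u ∈ H) (hψu : ψ u ≠ 1) :
    ∫ x, (H : Set G).indicator ψ x ∂μ = 0 := by
  have htranslate (x : G) :
      (H : Set G).indicator ψ (u + x) = ψ u * (H : Set G).indicator ψ x := by
    by_cases hx : x ∈ H
    · rw [Set.indicator_of_mem (H.add_mem hu hx), Set.indicator_of_mem hx,
        AddChar.map_add_eq_mul]
    · rw [Set.indicator_of_notMem (mt (H.add_mem_cancel_left hu).mp hx),
        Set.indicator_of_notMem hx, mul_zero]
  have h := integral_add_left_eq_self (μ := μ) ((H : Set G).indicator ψ) u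
  simp only [htranslate, integral_const_mul] at h
  exact (mul_left_eq_self₀.mp h).resolve_left hψu

namespace Padic

variable {p : ℕ} [Fact p.Prime]

theorem norm_zpow_mul_le_zpow_iff (n k : ℤ) (x : ℚ_[p]) :
    ‖(p : ℚ_[p]) ^ n * x‖ ≤ (p : ℝ) ^ k ↔ ‖x‖ ≤ (p : ℝ) ^ (n + k) := by
  have hp : (0 : ℝ) < p := mod_cast (Fact.out : p.Prime).pos
  rw [norm_mul, norm_p_zpow, zpow_neg, inv_mul_le_iff₀ (zpow_pos hp n), ← zpow_add₀ hp.ne']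

theorem norm_zpow_mul_le_one_iff (n : ℤ) (x : ℚ_[p]) :
    ‖(p : ℚ_[p]) ^ n * x‖ ≤ 1 ↔ ‖x‖ ≤ (p : ℝ) ^ n := by
  simpa using norm_zpow_mul_le_zpow_iff n 0 x

theorem exists_lt_norm_sub_natCast_le (x : ℤ_[p]) :
    ∃ j < p, ‖(x : ℚ_[p]) - j‖ ≤ (p : ℝ) ^ (-1 : ℤ) := by
  obtain ⟨j, hjp, hj⟩ := PadicInt.exists_mem_range x
  rw [IsLocalRing.mem_maximalIdeal, PadicInt.mem_nonunits, PadicInt.norm_def, PadicInt.coe_sub,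
    PadicInt.coe_natCast] at hj
  exact ⟨j, hjp, (norm_lt_pow_iff_norm_le_pow_sub_one _ 0).mp (by rwa [zpow_zero])⟩

theorem closedBall_zpow_add_one_eq_biUnion (m : ℤ) :
    closedBall (0 : ℚ_[p]) ((p : ℝ) ^ (m + 1)) =
      ⋃ j ∈ Finset.range p, closedBall ((j : ℚ_[p]) * (p : ℚ_[p]) ^ (-(m + 1))) ((p : ℝ) ^ m) := by
  have hp : (p : ℚ_[p]) ≠ 0 := mod_cast (Fact.out : p.Prime).ne_zero
  have hcenter (x : ℚ_[p]) (j : ℕ) :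
      x - j * (p : ℚ_[p]) ^ (-(m + 1)) =
        (p : ℚ_[p]) ^ (-(m + 1)) * ((p : ℚ_[p]) ^ (m + 1) * x - j) := by
    rw [mul_sub, ← mul_assoc, ← zpow_add₀ hp, neg_add_cancel, zpow_zero, one_mul, mul_comm]
  ext x
  simp only [mem_closedBall, dist_eq_norm, sub_zero, Set.mem_iUnion, Finset.mem_range,
    exists_prop, hcenter, norm_zpow_mul_le_zpow_iff, show -(m + 1) + m = -1 by ring]
  constructor
  · intro hx
    exact exists_lt_norm_sub_natCast_le ⟨_, (norm_zpow_mul_le_one_iff _ x).mpr hx⟩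
  · rintro ⟨j, -, hj⟩
    rw [← norm_zpow_mul_le_one_iff, ← sub_add_cancel ((p : ℚ_[p]) ^ (m + 1) * x) j]
    refine (nonarchimedean _ _).trans (max_le (hj.trans ?_) ?_)
    · exact zpow_le_one_of_nonpos₀ (mod_cast (Fact.out : p.Prime).one_le) (by norm_num)
    · exact IsUltrametricDist.norm_natCast_le_one ℚ_[p] j

theorem pairwiseDisjoint_closedBall_natCast_mul_zpow (m : ℤ) :
    (Finset.range p : Set ℕ).PairwiseDisjoint
      fun j => closedBall ((j : ℚ_[p]) * (p : ℚ_[p]) ^ (-(m + 1))) ((p : ℝ) ^ m) := by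
  intro i hi j hj hij
  simp only [Finset.coe_range, Set.mem_Iio] at hi hj
  refine Set.disjoint_left.mpr fun x hxi hxj => hij ?_
  have hdist := (IsUltrametricDist.dist_triangle_max _ x _).trans
    (max_le (mem_closedBall'.mp hxi) (mem_closedBall.mp hxj))
  rw [dist_eq_norm, ← sub_mul, mul_comm, norm_zpow_mul_le_zpow_iff,
    show -(m + 1) + m = 0 - 1 by ring, ← norm_lt_pow_iff_norm_le_pow_sub_one, zpow_zero,
    show (i : ℚ_[p]) - j = ((i - j : ℤ) : ℚ_[p]) by push_cast; ring,
    norm_intCast_lt_one_iff] at hdist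
  exact Nat.ModEq.eq_of_lt_of_lt (Nat.modEq_iff_dvd.mpr (by simpa using hdist.neg_right)) hi hj

section Haar

variable [MeasurableSpace ℚ_[p]] [BorelSpace ℚ_[p]]

theorem addHaar_closedBall_zpow_add_one (μ : Measure ℚ_[p]) [μ.IsAddHaarMeasure] (m : ℤ) :
    μ (closedBall 0 ((p : ℝ) ^ (m + 1))) = p * μ (closedBall 0 ((p : ℝ) ^ m)) := by
  rw [closedBall_zpow_add_one_eq_biUnion,
    measure_biUnion_finset (pairwiseDisjoint_closedBall_natCast_mul_zpow m)
      fun _ _ => measurableSet_closedBall]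
  simp only [Measure.addHaar_closedBall_center, Finset.sum_const, Finset.card_range, nsmul_eq_mul]

theorem addHaar_real_closedBall_zpow (μ : Measure ℚ_[p]) [μ.IsAddHaarMeasure] (n : ℤ) :
    μ.real (closedBall 0 ((p : ℝ) ^ n)) = (p : ℝ) ^ n * μ.real (closedBall 0 1) := by
  have hp : (p : ℝ) ≠ 0 := mod_cast (Fact.out : p.Prime).ne_zero
  have hstep (m : ℤ) :
      μ.real (closedBall 0 ((p : ℝ) ^ (m + 1))) = p * μ.real (closedBall 0 ((p : ℝ) ^ m)) := by
    simp only [measureReal_def, addHaar_closedBall_zpow_add_one, ENNReal.toReal_mul,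
      ENNReal.toReal_natCast]
  induction n using Int.induction_on with
  | zero => simp
  | succ i ih => rw [hstep, ih, zpow_add_one₀ hp]; ring
  | pred i ih =>
    have h := hstep (-i - 1)
    rw [sub_add_cancel] at h
    rw [show (p : ℝ) ^ (-(i : ℤ) - 1) * μ.real (closedBall 0 1) =
        (p : ℝ)⁻¹ * ((p : ℝ) ^ (-(i : ℤ)) * μ.real (closedBall 0 1)) by
      rw [zpow_sub_one₀ hp]; ring, ← ih, h, inv_mul_cancel_left₀ hp]

theorem integral_indicator_closedBall_char_mul (μ : Measure ℚ_[p]) [μ.IsAddLeftInvariant]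
    (χ : AddChar ℚ_[p] ℂ) (hχ₁ : ∀ x : ℚ_[p], ‖x‖ ≤ 1 → χ x = 1)
    (hχ₂ : ∀ x : ℚ_[p], 1 < ‖x‖ → χ x ≠ 1) (η : ℚ_[p]) (n : ℤ) :
    ∫ x, (closedBall 0 ((p : ℝ) ^ n)).indicator (fun x => χ (η * x)) x ∂μ =
      if ‖η‖ ≤ (p : ℝ) ^ (-n) then (μ.real (closedBall 0 ((p : ℝ) ^ n)) : ℂ) else 0 := by
  have hp : (0 : ℝ) < p := mod_cast (Fact.out : p.Prime).pos
  split_ifs with hη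
  · have htrivial : Set.EqOn (fun x => χ (η * x)) 1 (closedBall 0 ((p : ℝ) ^ n)) := by
      intro x hx
      refine hχ₁ _ ?_
      rw [norm_mul, ← zpow_neg_mul_zpow_self n hp.ne']
      exact mul_le_mul hη (mem_closedBall_zero_iff.mp hx) (norm_nonneg x) (zpow_nonneg hp.le _)
    rw [Set.indicator_congr htrivial, Pi.one_def,
      integral_indicator_const _ measurableSet_closedBall, Complex.real_smul, mul_one]
  · -- `u = (p η)⁻¹` lies in the ball and `χ (η u) = χ (p⁻¹) ≠ 1`.
    let H := (IsUltrametricDist.closedBall_openAddSubgroup ℚ_[p] (zpow_pos hp n)).toAddSubgroup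
    have hη0 : η ≠ 0 := by
      rintro rfl
      exact hη (by rw [norm_zero]; positivity)
    have hu : (p : ℚ_[p]) ^ (-1 : ℤ) * η⁻¹ ∈ H := by
      rw [norm_le_pow_iff_norm_lt_pow_add_one, not_lt] at hη
      change _ ∈ closedBall _ _
      rw [mem_closedBall_zero_iff, norm_zpow_mul_le_zpow_iff, norm_inv,
        show -1 + n = -(-n + 1) by ring, zpow_neg]
      exact inv_anti₀ (zpow_pos hp _) hη
    refine AddChar.integral_indicator_addSubgroup_eq_zero μ (χ.mulShift η) H hu ?_
    rw [AddChar.mulShift_apply, mul_left_comm, mul_inv_cancel₀ hη0, mul_one]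
    refine hχ₂ _ ?_
    rw [norm_p_zpow, neg_neg, zpow_one]
    exact_mod_cast (Fact.out : p.Prime).one_lt

end Haar

section Wavelet

variable (χ : AddChar ℚ_[p] ℂ) (r : ℤ) (k : ℕ) (b : ℚ_[p])

noncomputable def kozyrevWavelet (x : ℚ_[p]) : ℂ :=
  (((p : ℝ) ^ (-(r : ℝ) / 2) : ℝ) : ℂ) *
    χ ((p : ℚ_[p])⁻¹ * (k : ℚ_[p]) * ((p : ℚ_[p]) ^ r * x - b)) *
    (if ‖(p : ℚ_[p]) ^ r * x - b‖ ≤ 1 then 1 else 0)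

noncomputable def kozyrevWaveletFourier (ξ : ℚ_[p]) : ℂ :=
  (((p : ℝ) ^ ((r : ℝ) / 2) : ℝ) : ℂ) * χ ((p : ℚ_[p]) ^ (-r) * b * ξ) *
    (if ‖(p : ℚ_[p]) ^ (-r) * ξ + (p : ℚ_[p])⁻¹ * (k : ℚ_[p])‖ ≤ 1 then 1 else 0)

theorem kozyrevWavelet_add_mul_char (ξ x : ℚ_[p]) :
    kozyrevWavelet χ r k b ((p : ℚ_[p]) ^ (-r) * b + x) * χ (ξ * ((p : ℚ_[p]) ^ (-r) * b + x)) =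
      (((p : ℝ) ^ (-(r : ℝ) / 2) : ℝ) : ℂ) * χ ((p : ℚ_[p]) ^ (-r) * b * ξ) *
        (closedBall 0 ((p : ℝ) ^ r)).indicator
          (fun y => χ ((ξ + (p : ℚ_[p])⁻¹ * k * (p : ℚ_[p]) ^ r) * y)) x := by
  have hp : (p : ℚ_[p]) ≠ 0 := mod_cast (Fact.out : p.Prime).ne_zero
  have harg : (p : ℚ_[p]) ^ r * ((p : ℚ_[p]) ^ (-r) * b + x) - b = (p : ℚ_[p]) ^ r * x := by
    rw [mul_add, ← mul_assoc, ← zpow_add₀ hp, add_neg_cancel, zpow_zero, one_mul,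
      add_sub_cancel_left]
  simp only [kozyrevWavelet, harg, norm_zpow_mul_le_one_iff]
  by_cases hx : ‖x‖ ≤ (p : ℝ) ^ r
  · rw [if_pos hx, Set.indicator_of_mem (mem_closedBall_zero_iff.mpr hx),
      show ξ * ((p : ℚ_[p]) ^ (-r) * b + x) = (p : ℚ_[p]) ^ (-r) * b * ξ + ξ * x by ring,
      show (ξ + (p : ℚ_[p])⁻¹ * k * (p : ℚ_[p]) ^ r) * x =
        ξ * x + (p : ℚ_[p])⁻¹ * k * ((p : ℚ_[p]) ^ r * x) by ring,
      AddChar.map_add_eq_mul, AddChar.map_add_eq_mul]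
    ring
  · rw [if_neg hx, Set.indicator_of_notMem (mt mem_closedBall_zero_iff.mp hx), mul_zero, zero_mul,
      mul_zero]

theorem integral_kozyrevWavelet_mul_char [MeasurableSpace ℚ_[p]] [BorelSpace ℚ_[p]]
    (μ : Measure ℚ_[p]) [μ.IsAddHaarMeasure] (hμ : μ (closedBall 0 1) = 1)
    (hχ₁ : ∀ x : ℚ_[p], ‖x‖ ≤ 1 → χ x = 1) (hχ₂ : ∀ x : ℚ_[p], 1 < ‖x‖ → χ x ≠ 1)
    (ξ : ℚ_[p]) :
    ∫ x, kozyrevWavelet χ r k b x * χ (ξ * x) ∂μ = kozyrevWaveletFourier χ r k b ξ := by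
  have hp : (0 : ℝ) < p := mod_cast (Fact.out : p.Prime).pos
  have hcond : (p : ℚ_[p]) ^ (-r) * ξ + (p : ℚ_[p])⁻¹ * k =
      (p : ℚ_[p]) ^ (-r) * (ξ + (p : ℚ_[p])⁻¹ * k * (p : ℚ_[p]) ^ r) := by
    rw [mul_add, mul_comm _ ((p : ℚ_[p]) ^ r), ← mul_assoc, ← zpow_add₀ (mod_cast hp.ne'),
      neg_add_cancel, zpow_zero, one_mul]
  rw [← integral_add_left_eq_self _ ((p : ℚ_[p]) ^ (-r) * b)]
  simp only [kozyrevWavelet_add_mul_char]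
  rw [integral_const_mul, integral_indicator_closedBall_char_mul μ χ hχ₁ hχ₂,
    addHaar_real_closedBall_zpow, measureReal_def, hμ, ENNReal.toReal_one, mul_one,
    kozyrevWaveletFourier]
  simp only [hcond, norm_zpow_mul_le_one_iff]
  split_ifs
  · rw [mul_one, mul_right_comm, ← Complex.ofReal_mul, ← Real.rpow_intCast, ← Real.rpow_add hp]
    ring_nf
  · simp

theorem norm_eq_of_kozyrevWaveletFourier_ne_zero (hk : p.Coprime k) {ξ : ℚ_[p]}
    (h : kozyrevWaveletFourier χ r k b ξ ≠ 0) : ‖ξ‖ = (p : ℝ) ^ (1 - r) := by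
  have hp : (1 : ℝ) < p := mod_cast (Fact.out : p.Prime).one_lt
  have hcond : ‖(p : ℚ_[p]) ^ (-r) * ξ + (p : ℚ_[p])⁻¹ * k‖ ≤ 1 := by
    contrapose! h
    rw [kozyrevWaveletFourier, if_neg h.not_ge, mul_zero]
  have hk' : ‖(p : ℚ_[p])⁻¹ * k‖ = p := by
    rw [norm_mul, norm_inv, norm_p, inv_inv, norm_natCast_eq_one_iff.mpr hk, mul_one]
  have hξ := norm_eq_of_norm_add_lt_right (hcond.trans_lt (hk' ▸ hp))
  rw [hk', norm_mul, norm_p_zpow, neg_neg] at hξ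
  rw [zpow_sub₀ (by positivity), zpow_one, eq_div_iff (by positivity), mul_comm, hξ]

end Wavelet

end Padic

/-- The Fourier transform of the Kozyrev wavelet `Ψ_{rbk}` is
`Ψ̂_{rbk}(ξ) = p^{r/2} χ_p(p^{-r} b ξ) 1_{|p^{-r} ξ + p^{-1} k|_p ≤ 1}`, and
every `ξ` in the support of `Ψ̂_{rbk}` satisfies `|ξ|_p = p^{1−r}`. -/
theorem wavelet_fourier_transform
    (p : ℕ) [Fact p.Prime]
    [MeasurableSpace ℚ_[p]] [BorelSpace ℚ_[p]]
    (μ : Measure ℚ_[p]) [μ.IsAddHaarMeasure]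
    (hμ : μ {x : ℚ_[p] | ‖x‖ ≤ 1} = 1)
    (χ : AddChar ℚ_[p] ℂ)
    (hχ₁ : ∀ x : ℚ_[p], ‖x‖ ≤ 1 → χ x = 1)
    (hχ₂ : ∀ x : ℚ_[p], 1 < ‖x‖ → χ x ≠ 1)
    (r : ℤ) (k : ℕ) (hk₁ : 1 ≤ k) (hk₂ : k ≤ p - 1)
    (b : ℚ_[p])
    (Ψ : ℚ_[p] → ℂ)
    (hΨ : Ψ = fun x => (((p : ℝ) ^ (-(r : ℝ) / 2) : ℝ) : ℂ) *
        χ ((p : ℚ_[p])⁻¹ * (k : ℚ_[p]) * ((p : ℚ_[p]) ^ r * x - b)) *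
        (if ‖(p : ℚ_[p]) ^ r * x - b‖ ≤ 1 then 1 else 0)) :
    (∀ ξ : ℚ_[p],
        ∫ x, Ψ x * χ (ξ * x) ∂μ
          = (((p : ℝ) ^ ((r : ℝ) / 2) : ℝ) : ℂ) * χ ((p : ℚ_[p]) ^ (-r) * b * ξ) *
              (if ‖(p : ℚ_[p]) ^ (-r) * ξ + (p : ℚ_[p])⁻¹ * (k : ℚ_[p])‖ ≤ 1 then 1 else 0)) ∧
    (∀ ξ : ℚ_[p],
        (((p : ℝ) ^ ((r : ℝ) / 2) : ℝ) : ℂ) * χ ((p : ℚ_[p]) ^ (-r) * b * ξ) *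
            (if ‖(p : ℚ_[p]) ^ (-r) * ξ + (p : ℚ_[p])⁻¹ * (k : ℚ_[p])‖ ≤ 1 then 1 else 0) ≠ 0 →
          ‖ξ‖ = (p : ℝ) ^ (1 - r)) := by
  have hball : closedBall (0 : ℚ_[p]) 1 = {x | ‖x‖ ≤ 1} :=
    Set.ext fun _ => mem_closedBall_zero_iff
  have hk : p.Coprime k :=
    Nat.coprime_of_lt_prime (by omega) (by have := (Fact.out : p.Prime).pos; omega) Fact.out
  rw [show Ψ = Padic.kozyrevWavelet χ r k b from hΨ]
  exact ⟨Padic.integral_kozyrevWavelet_mul_char χ r k b μ (hball ▸ hμ) hχ₁ hχ₂,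
    fun _ => Padic.norm_eq_of_kozyrevWaveletFourier_ne_zero χ r k b hk⟩
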